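/- Let Λ be a lattice of full rank in ℝ². Then Δ(Λ) = π/(2√3) if and only if Λ is similar to the hexagonal lattice Λ_h, i.e., the hexagonal lattice is, up to rotation and dilation, the unique maximizer of the lattice packing density in ℝ². -/

import Mathlib

noncomputable section

open InnerProductGeometry Real
open scoped Classical

/-- The Euclidean plane `ℝ²`. -/
abbrev E2 := EuclideanSpace ℝ (Fin 2)

/-- `x₁, x₂` form a ℤ-basis of the lattice `Λ ⊆ ℝ²`: they are linearly independent
over ℝ and `Λ` is exactly the set of their integer linear combinations. -/
def IsZBasis (Λ : Set E2) (x₁ x₂ : E2) : Prop :=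
  LinearIndependent ℝ ![x₁, x₂] ∧ Λ = {v : E2 | ∃ a b : ℤ, v = a • x₁ + b • x₂}

/-- `Λ` is a lattice of full rank in `ℝ²`, i.e. `Λ = XZ²` for an invertible matrix `X`. -/
def IsLattice (Λ : Set E2) : Prop := ∃ x₁ x₂ : E2, IsZBasis Λ x₁ x₂

/-- The `i`-th successive minimum of `Λ`:
`λᵢ = inf {λ > 0 : Λ ∩ λB contains i linearly independent nonzero vectors}`. -/
noncomputable def succMin (Λ : Set E2) (i : ℕ) : ℝ :=
  sInf {r : ℝ | 0 < r ∧ ∃ v : Fin i → E2,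
    (∀ j, v j ∈ Λ ∧ ‖v j‖ ≤ r) ∧ LinearIndependent ℝ v}

/-- `|det X|` for the basis matrix with columns `x₁, x₂`. -/
def detB (x₁ x₂ : E2) : ℝ := |x₁ 0 * x₂ 1 - x₁ 1 * x₂ 0|

/-- The determinant of a lattice: `|det X|` for a basis matrix `X` of `Λ`
(independent of the choice of basis). -/
noncomputable def latDet (Λ : Set E2) : ℝ :=
  if h : IsLattice Λ then detB h.choose h.choose_spec.choose else 0

/-- The lattice packing density `Δ(Λ) = π λ₁² / (4 det Λ)`. -/
noncomputable def density (Λ : Set E2) : ℝ :=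
  π * (succMin Λ 1) ^ 2 / (4 * latDet Λ)

/-- `x₁, x₂` are vectors of `Λ` corresponding to the successive minima, chosen so that
the angle between them lies in `[0, π/2]`. -/
def IsMinPair (Λ : Set E2) (x₁ x₂ : E2) : Prop :=
  x₁ ∈ Λ ∧ x₂ ∈ Λ ∧ LinearIndependent ℝ ![x₁, x₂] ∧
    ‖x₁‖ = succMin Λ 1 ∧ ‖x₂‖ = succMin Λ 2 ∧ angle x₁ x₂ ≤ π / 2

/-- The angle `θ(Λ)` of a lattice: the angle between a pair of vectors corresponding to the
successive minima chosen with angle in `[0, π/2]` (for a well-rounded lattice this does not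
depend on the choice of such a pair). -/
noncomputable def latAngle (Λ : Set E2) : ℝ :=
  if h : ∃ p : E2 × E2, IsMinPair Λ p.1 p.2 then angle h.choose.1 h.choose.2 else 0

/-- `Λ` and `Ω` are similar lattices: `Ω = α U Λ` for a nonzero real `α` and an
orthogonal `2×2` matrix `U`. -/
def LatSimilar (Λ Ω : Set E2) : Prop :=
  ∃ (α : ℝ) (U : Matrix (Fin 2) (Fin 2) ℝ), α ≠ 0 ∧ U.transpose * U = 1 ∧
    Ω = (fun v => α • Matrix.toEuclideanLin U v) '' Λ

/-- The hexagonal lattice, spanned over ℤ by `(1, 0)` and `(1/2, √3/2)`. -/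
def hexLattice : Set E2 :=
  {v : E2 | ∃ a b : ℤ, v = a • ((WithLp.equiv 2 (Fin 2 → ℝ)).symm ![1, 0]) +
    b • ((WithLp.equiv 2 (Fin 2 → ℝ)).symm ![1 / 2, Real.sqrt 3 / 2])}

/-!
Every lattice has a reduced basis `(y₁, y₂)`: `y₁` is a shortest nonzero vector, hence primitive,
so it extends to a basis, and subtracting from `y₂` the nearest integer multiple of `y₁` and fixing
the sign gives `0 ≤ 2⟪y₁, y₂⟫ ≤ ‖y₁‖² ≤ ‖y₂‖²`. By Lagrange's identity
`det² = ‖y₁‖²‖y₂‖² - ⟪y₁, y₂⟫² ≥ 3‖y₁‖⁴/4`, so `Δ(Λ) = π‖y₁‖² / (4 det) ≤ π/(2√3)`, with equality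
exactly when `‖y₂‖ = ‖y₁‖` and `2⟪y₁, y₂⟫ = ‖y₁‖²`. Then the Gram matrix of `(y₁, y₂)` is a multiple
of that of the hexagonal basis, and a rotation, possibly followed by a reflection, and a dilation
carry one basis to the other. Conversely, the density is invariant under similarities.
-/

open scoped RealInnerProductSpace

def cross (v w : E2) : ℝ := v 0 * w 1 - v 1 * w 0

lemma detB_eq_abs_cross (v w : E2) : detB v w = |cross v w| := rfl

lemma E2.norm_sq_eq (v : E2) : ‖v‖ ^ 2 = v 0 ^ 2 + v 1 ^ 2 := by
  simp [EuclideanSpace.real_norm_sq_eq, Fin.sum_univ_two]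

lemma E2.inner_eq (v w : E2) : ⟪v, w⟫ = v 0 * w 0 + v 1 * w 1 := by
  simp [PiLp.inner_apply, Fin.sum_univ_two, mul_comm]

lemma cross_sq_add_inner_sq (v w : E2) : cross v w ^ 2 + ⟪v, w⟫ ^ 2 = ‖v‖ ^ 2 * ‖w‖ ^ 2 := by
  rw [E2.norm_sq_eq, E2.norm_sq_eq, E2.inner_eq, cross]
  ring

lemma abs_cross_le (v w : E2) : |cross v w| ≤ ‖v‖ * ‖w‖ := by
  apply abs_le_of_sq_le_sq _ (by positivity)
  nlinarith [cross_sq_add_inner_sq v w, sq_nonneg ⟪v, w⟫]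

lemma cross_comm (v w : E2) : cross w v = -cross v w := by
  simp only [cross]; ring

lemma detB_comm (v w : E2) : detB w v = detB v w := by
  rw [detB_eq_abs_cross, detB_eq_abs_cross, cross_comm, abs_neg]

lemma cross_smul_smul (c : ℝ) (v w : E2) : cross (c • v) (c • w) = c ^ 2 * cross v w := by
  simp only [cross, PiLp.smul_apply, smul_eq_mul]
  ring

lemma cross_zsmul_add_zsmul (x₁ x₂ : E2) (a b c d : ℤ) :
    cross (a • x₁ + b • x₂) (c • x₁ + d • x₂) = (a * d - b * c : ℤ) * cross x₁ x₂ := by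
  simp only [cross, PiLp.add_apply, PiLp.smul_apply, zsmul_eq_mul]
  push_cast
  ring

lemma cross_toEuclideanLin (U : Matrix (Fin 2) (Fin 2) ℝ) (v w : E2) :
    cross (U.toEuclideanLin v) (U.toEuclideanLin w) = U.det * cross v w := by
  simp only [cross, Matrix.det_fin_two, Matrix.toEuclideanLin, Matrix.ofLp_toLpLin,
    Matrix.toLin'_apply, Matrix.mulVec, dotProduct, Fin.sum_univ_two]
  ring

lemma linearIndependent_pair_iff_cross_ne_zero (x₁ x₂ : E2) :
    LinearIndependent ℝ ![x₁, x₂] ↔ cross x₁ x₂ ≠ 0 := by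
  rw [LinearIndependent.pair_iff]
  constructor
  · intro h hcross
    rw [cross] at hcross
    obtain ⟨-, h₁⟩ := h (x₂ 1) (-x₁ 1) (by ext i; fin_cases i <;> simp <;> linarith)
    obtain ⟨-, h₀⟩ := h (x₂ 0) (-x₁ 0) (by ext i; fin_cases i <;> simp <;> linarith)
    simpa using h 1 0 (by ext i; fin_cases i <;> simp_all)
  · intro hcross s t hst
    have h₀ : s * x₁ 0 + t * x₂ 0 = 0 := by simpa using congr($hst 0)
    have h₁ : s * x₁ 1 + t * x₂ 1 = 0 := by simpa using congr($hst 1)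
    constructor
    · refine (mul_eq_zero.1 ?_).resolve_right hcross
      unfold cross
      linear_combination x₂ 1 * h₀ - x₂ 0 * h₁
    · refine (mul_eq_zero.1 ?_).resolve_right hcross
      unfold cross
      linear_combination x₁ 0 * h₁ - x₁ 1 * h₀

lemma setOf_zsmul_add_zsmul_eq_span (x₁ x₂ : E2) :
    {v : E2 | ∃ a b : ℤ, v = a • x₁ + b • x₂} = Submodule.span ℤ {x₁, x₂} := by
  ext v
  simp [Submodule.mem_span_pair, eq_comm]

lemma abs_mul_detB_le (x₁ x₂ : E2) (a b : ℤ) :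
    |(a : ℝ)| * detB x₁ x₂ ≤ ‖a • x₁ + b • x₂‖ * ‖x₂‖ := by
  have h : cross (a • x₁ + b • x₂) x₂ = a * cross x₁ x₂ := by
    simpa using cross_zsmul_add_zsmul x₁ x₂ a b 0 1
  rw [detB_eq_abs_cross, ← abs_mul, ← h]
  exact abs_cross_le _ _

lemma inner_zsmul_add_zsmul (v w : E2) (m n : ℤ) :
    ⟪v, m • v + n • w⟫ = m * ‖v‖ ^ 2 + n * ⟪v, w⟫ := by
  simp only [inner_add_right, ← Int.cast_smul_eq_zsmul ℝ, real_inner_smul_right,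
    real_inner_self_eq_norm_sq]

structure IsShortestVector (Λ : Set E2) (v : E2) : Prop where
  mem : v ∈ Λ
  ne_zero : v ≠ 0
  norm_le : ∀ w ∈ Λ, w ≠ 0 → ‖v‖ ≤ ‖w‖

structure IsReducedBasis (Λ : Set E2) (y₁ y₂ : E2) : Prop where
  isZBasis : IsZBasis Λ y₁ y₂
  isShortestVector : IsShortestVector Λ y₁
  inner_nonneg : 0 ≤ ⟪y₁, y₂⟫
  two_inner_le : 2 * ⟪y₁, y₂⟫ ≤ ‖y₁‖ ^ 2

namespace IsZBasis

variable {Λ : Set E2} {x₁ x₂ : E2}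

lemma mem_iff (hx : IsZBasis Λ x₁ x₂) {v : E2} : v ∈ Λ ↔ ∃ a b : ℤ, v = a • x₁ + b • x₂ := by
  rw [hx.2]; rfl

lemma eq_span (hx : IsZBasis Λ x₁ x₂) : Λ = Submodule.span ℤ {x₁, x₂} :=
  hx.2.trans (setOf_zsmul_add_zsmul_eq_span x₁ x₂)

lemma zsmul_add_zsmul_mem (hx : IsZBasis Λ x₁ x₂) {v w : E2} (hv : v ∈ Λ) (hw : w ∈ Λ)
    (a b : ℤ) : a • v + b • w ∈ Λ := by
  rw [hx.eq_span] at hv hw ⊢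
  exact add_mem (Submodule.smul_mem _ a hv) (Submodule.smul_mem _ b hw)

lemma left_mem (hx : IsZBasis Λ x₁ x₂) : x₁ ∈ Λ := by
  rw [hx.eq_span]; exact Submodule.subset_span (by simp)

lemma right_mem (hx : IsZBasis Λ x₁ x₂) : x₂ ∈ Λ := by
  rw [hx.eq_span]; exact Submodule.subset_span (by simp)

lemma left_ne_zero (hx : IsZBasis Λ x₁ x₂) : x₁ ≠ 0 := by
  simpa using hx.1.ne_zero 0

lemma right_ne_zero (hx : IsZBasis Λ x₁ x₂) : x₂ ≠ 0 := by
  simpa using hx.1.ne_zero 1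

lemma cross_ne_zero (hx : IsZBasis Λ x₁ x₂) : cross x₁ x₂ ≠ 0 :=
  (linearIndependent_pair_iff_cross_ne_zero x₁ x₂).1 hx.1

lemma detB_pos (hx : IsZBasis Λ x₁ x₂) : 0 < detB x₁ x₂ :=
  abs_pos.2 hx.cross_ne_zero

lemma zsmul_add_zsmul_of_isUnit (hx : IsZBasis Λ x₁ x₂) {a b c d : ℤ}
    (hdet : IsUnit (a * d - b * c)) : IsZBasis Λ (a • x₁ + b • x₂) (c • x₁ + d • x₂) := by
  refine ⟨?_, ?_⟩
  · rw [linearIndependent_pair_iff_cross_ne_zero, cross_zsmul_add_zsmul]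
    exact mul_ne_zero (by exact_mod_cast hdet.ne_zero) hx.cross_ne_zero
  · obtain ⟨e, he⟩ := hdet.exists_left_inv
    rw [setOf_zsmul_add_zsmul_eq_span, hx.eq_span]
    refine le_antisymm (Submodule.span_le.2 ?_) (Submodule.span_le.2 ?_) <;>
      rintro v (rfl | rfl) <;> simp only [SetLike.mem_coe, Submodule.mem_span_pair]
    · exact ⟨e * d, -(e * b), by linear_combination (norm := module) he • v⟩
    · exact ⟨-(e * c), e * a, by linear_combination (norm := module) he • v⟩
    · exact ⟨a, b, rfl⟩
    · exact ⟨c, d, rfl⟩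

lemma detB_le {y₁ y₂ : E2} (hx : IsZBasis Λ x₁ x₂) (hy : IsZBasis Λ y₁ y₂) :
    detB x₁ x₂ ≤ detB y₁ y₂ := by
  obtain ⟨a, b, rfl⟩ := hx.mem_iff.1 hy.left_mem
  obtain ⟨c, d, rfl⟩ := hx.mem_iff.1 hy.right_mem
  have hdet : a * d - b * c ≠ 0 := by
    intro h
    apply hy.cross_ne_zero
    rw [cross_zsmul_add_zsmul, h, Int.cast_zero, zero_mul]
  rw [detB_eq_abs_cross, detB_eq_abs_cross, cross_zsmul_add_zsmul, abs_mul]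
  refine le_mul_of_one_le_left (abs_nonneg _) ?_
  exact_mod_cast Int.one_le_abs hdet

lemma image_eq (hx : IsZBasis Λ x₁ x₂) (L : E2 →ₗ[ℝ] E2) :
    L '' Λ = {v | ∃ a b : ℤ, v = a • L x₁ + b • L x₂} := by
  ext v
  simp [hx.mem_iff, eq_comm]

lemma image (hx : IsZBasis Λ x₁ x₂) (L : E2 →ₗ[ℝ] E2) (hL : Function.Injective L) :
    IsZBasis (L '' Λ) (L x₁) (L x₂) := by
  refine ⟨?_, hx.image_eq L⟩
  refine LinearIndependent.pair_iff.2 fun s t hst ↦ LinearIndependent.pair_iff.1 hx.1 s t ?_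
  exact hL (by simpa using hst)

lemma finite_inter_closedBall (hx : IsZBasis Λ x₁ x₂) (R : ℝ) :
    (Λ ∩ Metric.closedBall 0 R).Finite := by
  set N : ℤ := ⌈R * (‖x₁‖ + ‖x₂‖) / detB x₁ x₂⌉
  have hcoeff : ∀ n : ℤ, |(n : ℝ)| * detB x₁ x₂ ≤ R * (‖x₁‖ + ‖x₂‖) → n ∈ Set.Icc (-N) N := by
    intro n hn
    have : ((|n| : ℤ) : ℝ) ≤ N := by
      rw [Int.cast_abs]
      exact ((le_div_iff₀ hx.detB_pos).2 hn).trans (Int.le_ceil _)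
    exact abs_le.1 (by exact_mod_cast this)
  refine (((Set.finite_Icc (-N) N).prod (Set.finite_Icc (-N) N)).image
    fun p : ℤ × ℤ ↦ p.1 • x₁ + p.2 • x₂).subset ?_
  rintro v ⟨hv, hvR⟩
  obtain ⟨a, b, rfl⟩ := hx.mem_iff.1 hv
  rw [mem_closedBall_zero_iff] at hvR
  have hR : 0 ≤ R := (norm_nonneg _).trans hvR
  refine ⟨(a, b), ⟨hcoeff a ?_, hcoeff b ?_⟩, rfl⟩
  · calc |(a : ℝ)| * detB x₁ x₂ ≤ ‖a • x₁ + b • x₂‖ * ‖x₂‖ := abs_mul_detB_le x₁ x₂ a b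
      _ ≤ R * (‖x₁‖ + ‖x₂‖) := by gcongr; linarith [norm_nonneg x₁]
  · calc |(b : ℝ)| * detB x₁ x₂ ≤ ‖b • x₂ + a • x₁‖ * ‖x₁‖ := by
          simpa [detB_comm] using abs_mul_detB_le x₂ x₁ b a
      _ ≤ R * (‖x₁‖ + ‖x₂‖) := by rw [add_comm]; gcongr; linarith [norm_nonneg x₂]

lemma exists_min_norm (hx : IsZBasis Λ x₁ x₂) {s : Set E2} (hs : s ⊆ Λ) (hne : s.Nonempty) :
    ∃ v ∈ s, ∀ w ∈ s, ‖v‖ ≤ ‖w‖ := by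
  obtain ⟨w₀, hw₀⟩ := hne
  obtain ⟨v, ⟨hv, -⟩, hmin⟩ := Set.exists_min_image (s ∩ Metric.closedBall 0 ‖w₀‖) norm
    ((hx.finite_inter_closedBall _).subset (Set.inter_subset_inter_left _ hs)) ⟨w₀, hw₀, by simp⟩
  refine ⟨v, hv, fun w hw ↦ ?_⟩
  rcases le_total ‖w‖ ‖w₀‖ with h | h
  · exact hmin w ⟨hw, by simpa using h⟩
  · exact (hmin w₀ ⟨hw₀, by simp⟩).trans h

lemma exists_isShortestVector (hx : IsZBasis Λ x₁ x₂) : ∃ v, IsShortestVector Λ v := by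
  obtain ⟨v, ⟨hv, hv0⟩, hmin⟩ := hx.exists_min_norm (s := {w ∈ Λ | w ≠ 0}) (fun _ h ↦ h.1)
    ⟨x₁, hx.left_mem, hx.left_ne_zero⟩
  exact ⟨v, ⟨hv, hv0, fun w hw hw0 ↦ hmin w ⟨hw, hw0⟩⟩⟩

lemma isCoprime_of_isShortestVector (hx : IsZBasis Λ x₁ x₂) {a b : ℤ}
    (hv : IsShortestVector Λ (a • x₁ + b • x₂)) : IsCoprime a b := by
  rw [Int.isCoprime_iff_gcd_eq_one]
  obtain ⟨a', ha⟩ := Int.gcd_dvd_left a b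
  obtain ⟨b', hb⟩ := Int.gcd_dvd_right a b
  set g := a.gcd b
  set w := a' • x₁ + b' • x₂
  have hvw : a • x₁ + b • x₂ = (g : ℝ) • w := by
    rw [ha, hb]; simp only [w, smul_add, mul_smul]; norm_cast
  have hw0 : w ≠ 0 := by
    rintro h; apply hv.ne_zero; rw [hvw, h, smul_zero]
  have hle := hv.norm_le w (hx.zsmul_add_zsmul_mem hx.left_mem hx.right_mem a' b') hw0
  rw [hvw, norm_smul, Real.norm_natCast] at hle
  have hg1 : g ≤ 1 := by
    have : (g : ℝ) * ‖w‖ ≤ 1 * ‖w‖ := by rwa [one_mul]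
    exact_mod_cast le_of_mul_le_mul_right this (norm_pos_iff.2 hw0)
  have hg0 : g ≠ 0 := by
    intro h
    obtain ⟨rfl, rfl⟩ := Int.gcd_eq_zero_iff.1 h
    exact hv.ne_zero (by simp)
  omega

lemma exists_isZBasis_of_isCoprime (hx : IsZBasis Λ x₁ x₂) {a b : ℤ} (h : IsCoprime a b) :
    ∃ y₂, IsZBasis Λ (a • x₁ + b • x₂) y₂ := by
  obtain ⟨u, v, huv⟩ := h
  refine ⟨(-v) • x₁ + u • x₂, hx.zsmul_add_zsmul_of_isUnit ?_⟩
  rw [show a * u - b * -v = 1 by linear_combination huv]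
  exact isUnit_one

lemma exists_isReducedBasis_of_isShortestVector (hx : IsZBasis Λ x₁ x₂)
    (hx₁ : IsShortestVector Λ x₁) : ∃ y₂, IsReducedBasis Λ x₁ y₂ := by
  set k := round (⟪x₁, x₂⟫ / ‖x₁‖ ^ 2)
  set c := ⟪x₁, x₂⟫ - k * ‖x₁‖ ^ 2
  have hA : 0 < ‖x₁‖ ^ 2 := by have := norm_pos_iff.2 hx₁.ne_zero; positivity
  have hc : 2 * |c| ≤ ‖x₁‖ ^ 2 := by
    have h := abs_sub_round (⟪x₁, x₂⟫ / ‖x₁‖ ^ 2)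
    have hc' : c = (⟪x₁, x₂⟫ / ‖x₁‖ ^ 2 - k) * ‖x₁‖ ^ 2 := by
      rw [sub_mul, div_mul_cancel₀ _ hA.ne']
    rw [hc', abs_mul, abs_of_pos hA]
    nlinarith
  obtain ⟨s, hs, hsc⟩ : ∃ s : ℤ, s * s = 1 ∧ s * c = |c| := by
    rcases le_total 0 c with h | h
    · exact ⟨1, rfl, by simp [abs_of_nonneg h]⟩
    · exact ⟨-1, rfl, by simp [abs_of_nonpos h]⟩
  have hbasis := hx.zsmul_add_zsmul_of_isUnit (a := 1) (b := 0) (c := -(s * k)) (d := s)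
    (by simpa using IsUnit.of_mul_eq_one s hs)
  rw [one_smul, zero_smul, add_zero] at hbasis
  have hinner : ⟪x₁, (-(s * k)) • x₁ + s • x₂⟫ = |c| := by
    rw [inner_zsmul_add_zsmul, ← hsc]; push_cast; ring
  exact ⟨_, hbasis, hx₁, hinner ▸ abs_nonneg c, hinner ▸ hc⟩

lemma exists_isReducedBasis (hx : IsZBasis Λ x₁ x₂) : ∃ y₁ y₂, IsReducedBasis Λ y₁ y₂ := by
  obtain ⟨y₁, hy₁⟩ := hx.exists_isShortestVector
  obtain ⟨a, b, rfl⟩ := hx.mem_iff.1 hy₁.mem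
  obtain ⟨y₂, hy⟩ := hx.exists_isZBasis_of_isCoprime (hx.isCoprime_of_isShortestVector hy₁)
  exact ⟨_, hy.exists_isReducedBasis_of_isShortestVector hy₁⟩

end IsZBasis

lemma latDet_eq_detB {Λ : Set E2} {x₁ x₂ : E2} (hx : IsZBasis Λ x₁ x₂) :
    latDet Λ = detB x₁ x₂ := by
  have hΛ : IsLattice Λ := ⟨x₁, x₂, hx⟩
  have hchosen := hΛ.choose_spec.choose_spec
  rw [latDet, dif_pos hΛ]
  exact le_antisymm (hchosen.detB_le hx) (hx.detB_le hchosen)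

namespace IsShortestVector

variable {Λ : Set E2} {v : E2}

lemma succMin_one_eq (hv : IsShortestVector Λ v) : succMin Λ 1 = ‖v‖ := by
  have hset : {r : ℝ | 0 < r ∧ ∃ u : Fin 1 → E2,
      (∀ j, u j ∈ Λ ∧ ‖u j‖ ≤ r) ∧ LinearIndependent ℝ u} = Set.Ici ‖v‖ := by
    ext r
    constructor
    · rintro ⟨-, u, hu, hli⟩
      exact (hv.norm_le (u 0) (hu 0).1 (hli.ne_zero 0)).trans (hu 0).2
    · intro hr
      refine ⟨(norm_pos_iff.2 hv.ne_zero).trans_le hr, fun _ ↦ v, fun _ ↦ ⟨hv.mem, hr⟩, ?_⟩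
      exact linearIndependent_unique_iff.2 hv.ne_zero
  rw [succMin, hset, csInf_Ici]

lemma image (hv : IsShortestVector Λ v) (L : E2 →ₗ[ℝ] E2) {c : ℝ} (hc : 0 < c)
    (hL : ∀ w, ‖L w‖ = c * ‖w‖) : IsShortestVector (L '' Λ) (L v) where
  mem := Set.mem_image_of_mem L hv.mem
  ne_zero := by
    rw [← norm_ne_zero_iff, hL]
    exact mul_ne_zero hc.ne' (norm_ne_zero_iff.2 hv.ne_zero)
  norm_le := by
    rintro _ ⟨w, hw, rfl⟩ hw0
    rw [hL, hL]
    exact mul_le_mul_of_nonneg_left (hv.norm_le w hw (by rintro rfl; simp at hw0)) hc.le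

end IsShortestVector

namespace IsReducedBasis

variable {Λ : Set E2} {y₁ y₂ : E2}

lemma norm_le (h : IsReducedBasis Λ y₁ y₂) : ‖y₁‖ ≤ ‖y₂‖ :=
  h.isShortestVector.norm_le y₂ h.isZBasis.right_mem h.isZBasis.right_ne_zero

lemma density_eq (h : IsReducedBasis Λ y₁ y₂) :
    density Λ = π * ‖y₁‖ ^ 2 / (4 * |cross y₁ y₂|) := by
  rw [density, h.isShortestVector.succMin_one_eq, latDet_eq_detB h.isZBasis, detB_eq_abs_cross]

lemma four_cross_sq_eq_of_density_eq (h : IsReducedBasis Λ y₁ y₂)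
    (hdens : density Λ = π / (2 * √3)) : 4 * cross y₁ y₂ ^ 2 = 3 * ‖y₁‖ ^ 4 := by
  have hcross := abs_pos.2 h.isZBasis.cross_ne_zero
  have habs : 2 * |cross y₁ y₂| = √3 * ‖y₁‖ ^ 2 := by
    rw [h.density_eq] at hdens
    field_simp at hdens
    linarith
  calc 4 * cross y₁ y₂ ^ 2 = (2 * |cross y₁ y₂|) ^ 2 := by rw [mul_pow, sq_abs]; norm_num
    _ = (√3 * ‖y₁‖ ^ 2) ^ 2 := by rw [habs]
    _ = 3 * ‖y₁‖ ^ 4 := by rw [mul_pow, Real.sq_sqrt zero_le_three]; ring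

lemma eq_of_four_cross_sq_eq (h : IsReducedBasis Λ y₁ y₂)
    (heq : 4 * cross y₁ y₂ ^ 2 = 3 * ‖y₁‖ ^ 4) :
    ‖y₂‖ = ‖y₁‖ ∧ 2 * ⟪y₁, y₂⟫ = ‖y₁‖ ^ 2 := by
  have hA : 0 < ‖y₁‖ ^ 2 := by
    have := norm_pos_iff.2 h.isShortestVector.ne_zero; positivity
  have hC : ‖y₁‖ ^ 2 ≤ ‖y₂‖ ^ 2 := by gcongr; exact h.norm_le
  have hlag := cross_sq_add_inner_sq y₁ y₂
  have hB := h.inner_nonneg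
  have hB' := h.two_inner_le
  -- with `A = ‖y₁‖²`, `B = ⟪y₁, y₂⟫`, `C = ‖y₂‖²`, by `hlag` `heq` says
  -- `4A(C - A) + (A² - 4B²) = 0`, and both summands are nonnegative
  have hCA : ‖y₂‖ ^ 2 = ‖y₁‖ ^ 2 := by nlinarith
  refine ⟨(sq_eq_sq₀ (norm_nonneg _) (norm_nonneg _)).1 hCA, ?_⟩
  nlinarith

end IsReducedBasis

open Matrix in
lemma norm_toEuclideanLin_of_transpose_mul_self {n : Type*} [Fintype n] [DecidableEq n]
    {U : Matrix n n ℝ} (hU : U.transpose * U = 1) (v : EuclideanSpace ℝ n) :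
    ‖U.toEuclideanLin v‖ = ‖v‖ := by
  rw [← sq_eq_sq₀ (norm_nonneg _) (norm_nonneg _), ← real_inner_self_eq_norm_sq,
    ← real_inner_self_eq_norm_sq, EuclideanSpace.inner_eq_star_dotProduct,
    EuclideanSpace.inner_eq_star_dotProduct]
  change (U *ᵥ v.ofLp) ⬝ᵥ star (U *ᵥ v.ofLp) = v.ofLp ⬝ᵥ star v.ofLp
  rw [star_trivial, star_trivial, dotProduct_mulVec, ← vecMul_transpose, vecMul_vecMul, hU,
    vecMul_one]

lemma abs_det_of_transpose_mul_self {n : Type*} [Fintype n] [DecidableEq n]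
    {U : Matrix n n ℝ} (hU : U.transpose * U = 1) : |U.det| = 1 := by
  rw [← abs_one, ← sq_eq_sq_iff_abs_eq_abs]
  simpa [Matrix.det_mul, Matrix.det_transpose, sq] using congrArg Matrix.det hU

lemma density_eq_of_latSimilar {Λ Ω : Set E2} (hΛ : IsLattice Λ) (h : LatSimilar Λ Ω) :
    density Ω = density Λ := by
  obtain ⟨x₁, x₂, hx⟩ := hΛ
  obtain ⟨α, U, hα, hU, rfl⟩ := h
  set L : E2 →ₗ[ℝ] E2 := α • U.toEuclideanLin
  change density (L '' Λ) = density Λ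
  have hL : ∀ w, ‖L w‖ = |α| * ‖w‖ := fun w ↦ by
    simp [L, norm_smul, norm_toEuclideanLin_of_transpose_mul_self hU]
  have hLinj : Function.Injective L := by
    refine (injective_iff_map_eq_zero L).2 fun w hw ↦ ?_
    simpa [hL, hα] using congrArg norm hw
  obtain ⟨v, hv⟩ := hx.exists_isShortestVector
  have hdetB : detB (L x₁) (L x₂) = α ^ 2 * detB x₁ x₂ := by
    simp only [detB_eq_abs_cross, L, LinearMap.smul_apply, cross_smul_smul, cross_toEuclideanLin,
      abs_mul, abs_of_nonneg (sq_nonneg α), abs_det_of_transpose_mul_self hU, one_mul]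
  rw [density, density, (hv.image L (abs_pos.2 hα) hL).succMin_one_eq, hv.succMin_one_eq,
    latDet_eq_detB (hx.image L hLinj), latDet_eq_detB hx, hL, hdetB, mul_pow, sq_abs]
  field_simp [hx.detB_pos.ne']

def hexVec₁ : E2 := (WithLp.equiv 2 (Fin 2 → ℝ)).symm ![1, 0]

def hexVec₂ : E2 := (WithLp.equiv 2 (Fin 2 → ℝ)).symm ![1 / 2, √3 / 2]

lemma isZBasis_hexLattice : IsZBasis hexLattice hexVec₁ hexVec₂ := by
  refine ⟨?_, rfl⟩
  rw [linearIndependent_pair_iff_cross_ne_zero]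
  simp [cross, hexVec₁, hexVec₂]

lemma norm_sq_hexVec (a b : ℤ) : ‖a • hexVec₁ + b • hexVec₂‖ ^ 2 = a ^ 2 + a * b + b ^ 2 := by
  simp only [E2.norm_sq_eq, hexVec₁, hexVec₂, WithLp.equiv_symm_apply, PiLp.add_apply,
    PiLp.smul_apply, zsmul_eq_mul, Matrix.cons_val_zero, Matrix.cons_val_one,
    Matrix.cons_val_fin_one]
  linear_combination (b ^ 2 / 4 : ℝ) * Real.sq_sqrt (zero_le_three (α := ℝ))

lemma norm_sq_hexVec₁ : ‖hexVec₁‖ ^ 2 = 1 := by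
  simpa using norm_sq_hexVec 1 0

lemma one_le_sq_add_mul_add_sq {a b : ℤ} (h : (a, b) ≠ 0) : 1 ≤ a ^ 2 + a * b + b ^ 2 := by
  rcases eq_or_ne b 0 with rfl | hb
  · have ha : a ≠ 0 := by rintro rfl; exact h rfl
    simpa using Int.one_le_abs ha
  · nlinarith [sq_nonneg (2 * a + b), sq_pos_of_ne_zero hb]

lemma isShortestVector_hexVec₁ : IsShortestVector hexLattice hexVec₁ where
  mem := isZBasis_hexLattice.left_mem
  ne_zero := isZBasis_hexLattice.left_ne_zero
  norm_le := by
    intro w hw hw0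
    obtain ⟨a, b, rfl⟩ := isZBasis_hexLattice.mem_iff.1 hw
    have hab : (a, b) ≠ 0 := by rintro ⟨⟩; simp at hw0
    rw [← sq_le_sq₀ (norm_nonneg _) (norm_nonneg _), norm_sq_hexVec, norm_sq_hexVec₁]
    exact_mod_cast one_le_sq_add_mul_add_sq hab

lemma density_hexLattice : density hexLattice = π / (2 * √3) := by
  rw [density, isShortestVector_hexVec₁.succMin_one_eq, latDet_eq_detB isZBasis_hexLattice,
    norm_sq_hexVec₁]
  simp only [detB, hexVec₁, hexVec₂, WithLp.equiv_symm_apply, Matrix.cons_val_zero,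
    Matrix.cons_val_one, Matrix.cons_val_fin_one]
  rw [one_mul, zero_mul, sub_zero, abs_of_pos (by positivity)]
  ring

lemma latSimilar_hexLattice {Λ : Set E2} {y₁ y₂ : E2} (hy : IsZBasis Λ y₁ y₂)
    (hnorm : ‖y₂‖ = ‖y₁‖) (hinner : 2 * ⟪y₁, y₂⟫ = ‖y₁‖ ^ 2) : LatSimilar Λ hexLattice := by
  set r := ‖y₁‖
  have hr : 0 < r := norm_pos_iff.2 hy.left_ne_zero
  have habs : |cross y₁ y₂| = √3 / 2 * r ^ 2 := by
    rw [← abs_of_nonneg (by positivity : 0 ≤ √3 / 2 * r ^ 2), ← sq_eq_sq_iff_abs_eq_abs, mul_pow,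
      div_pow, sq_sqrt zero_le_three]
    have hlag := cross_sq_add_inner_sq y₁ y₂
    rw [hnorm] at hlag
    nlinarith
  obtain ⟨s, hs, hsc⟩ : ∃ s : ℝ, s ^ 2 = 1 ∧ s * cross y₁ y₂ = √3 / 2 * r ^ 2 := by
    rcases le_total 0 (cross y₁ y₂) with h | h
    · exact ⟨1, by norm_num, by rw [one_mul, ← habs, abs_of_nonneg h]⟩
    · exact ⟨-1, by norm_num, by rw [neg_one_mul, ← habs, abs_of_nonpos h]⟩
  -- `U` is the rotation taking `y₁` to `r • e₁`, followed by a reflection if `s = -1`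
  set U : Matrix (Fin 2) (Fin 2) ℝ := r⁻¹ • !![y₁ 0, y₁ 1; -(s * y₁ 1), s * y₁ 0]
  have hr2 : y₁ 0 ^ 2 + y₁ 1 ^ 2 = r ^ 2 := (E2.norm_sq_eq y₁).symm
  have hU : U.transpose * U = 1 := by
    ext i j
    fin_cases i <;> fin_cases j <;> simp [U, Matrix.mul_apply, Fin.sum_univ_two] <;> field_simp
    · linear_combination hr2 + y₁ 1 ^ 2 * hs
    · linear_combination -(y₁ 0 * y₁ 1) * hs
    · linear_combination -(y₁ 1 * y₁ 0) * hs
    · linear_combination hr2 + y₁ 0 ^ 2 * hs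
  set L : E2 →ₗ[ℝ] E2 := r⁻¹ • U.toEuclideanLin
  have hL₁ : L y₁ = hexVec₁ := by
    ext i; fin_cases i <;> simp [L, U, hexVec₁, Matrix.vecHead, Matrix.vecTail] <;> field_simp
    · exact hr2
    · right; ring
  have hL₂ : L y₂ = hexVec₂ := by
    ext i; fin_cases i <;> simp [L, U, hexVec₂, Matrix.vecHead, Matrix.vecTail] <;> field_simp
    · rw [E2.inner_eq] at hinner
      linear_combination hinner
    · rw [cross] at hsc
      linear_combination 2 * hsc
  refine ⟨r⁻¹, U, inv_ne_zero hr.ne', hU, ?_⟩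
  change hexLattice = L '' Λ
  rw [hy.image_eq, hL₁, hL₂]
  rfl

/-- A full-rank lattice `Λ ⊆ ℝ²` satisfies `Δ(Λ) = π/(2√3)` iff `Λ` is
similar to the hexagonal lattice. -/
theorem stmt12 (Λ : Set E2) (hΛ : IsLattice Λ) :
    density Λ = π / (2 * Real.sqrt 3) ↔ LatSimilar Λ hexLattice := by
  refine ⟨fun hdens ↦ ?_, fun h ↦ (density_eq_of_latSimilar hΛ h).symm.trans density_hexLattice⟩
  obtain ⟨x₁, x₂, hx⟩ := hΛ
  obtain ⟨y₁, y₂, hy⟩ := hx.exists_isReducedBasis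
  obtain ⟨hnorm, hinner⟩ := hy.eq_of_four_cross_sq_eq (hy.four_cross_sq_eq_of_density_eq hdens)
  exact latSimilar_hexLattice hy.isZBasis hnorm hinner
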